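/- arXiv:1908.00121 — 3 statements merged into one kernel-verified Lean document; each statement's English description precedes it below -/
import Mathlib

section
/- In any run of the continued fraction algorithm of length N ∈ ℕ ∪ {∞} on input z ∈ ℂ, for every 1 ≤ n ≤ N one has |q_n·z − p_n| ≤ ε·|q_{n−1}·z − p_{n−1}|; consequently |q_n·z − p_n| ≤ ε^n for every 1 ≤ n ≤ N. -/
noncomputable section

namespace CFNE

/-- τ = (Δ + i·√|Δ|)/2. -/
def tau (Δ : ℤ) : ℂ := ((Δ : ℂ) + Complex.I * (Real.sqrt |(Δ : ℝ)|)) / 2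

/-- The imaginary quadratic order 𝒪 = ℤ[τ] of discriminant Δ, as a subring of ℂ. -/
def O (Δ : ℤ) : Subring ℂ := Subring.closure {tau Δ}

/-- A (nonzero or zero) ideal of 𝒪, presented as a subset of ℂ. -/
structure IdealS (Δ : ℤ) where
  carrier : Set ℂ
  subset : carrier ⊆ (O Δ : Set ℂ)
  zero_mem : (0 : ℂ) ∈ carrier
  add_mem : ∀ x ∈ carrier, ∀ y ∈ carrier, x + y ∈ carrier
  neg_mem : ∀ x ∈ carrier, -x ∈ carrier
  smul_mem : ∀ r ∈ (O Δ : Set ℂ), ∀ x ∈ carrier, r * x ∈ carrier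

/-- The ideal as an additive subgroup of ℂ. -/
def IdealS.toAddSubgroup {Δ : ℤ} (I : IdealS Δ) : AddSubgroup ℂ where
  carrier := I.carrier
  zero_mem' := I.zero_mem
  add_mem' := fun hx hy => I.add_mem _ hx _ hy
  neg_mem' := fun hx => I.neg_mem _ hx

/-- The norm of an ideal: the index [𝒪 : 𝔟]. -/
def IdealS.norm {Δ : ℤ} (I : IdealS Δ) : ℕ :=
  I.toAddSubgroup.relIndex (O Δ).toAddSubgroup

/-- The ideal is nonzero. -/
def IdealS.Nonzero {Δ : ℤ} (I : IdealS Δ) : Prop := ∃ x ∈ I.carrier, x ≠ 0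

/-- Two nonzero ideals lie in the same class if x·𝔞 = y·𝔟 for some nonzero x, y ∈ 𝒪. -/
def SameClass {Δ : ℤ} (I J : IdealS Δ) : Prop :=
  ∃ x ∈ (O Δ : Set ℂ), ∃ y ∈ (O Δ : Set ℂ), x ≠ 0 ∧ y ≠ 0 ∧
    (fun t => x * t) '' I.carrier = (fun t => y * t) '' J.carrier

/-- A reduced ideal: a nonzero ideal of minimal norm in its ideal class. -/
def IsReduced {Δ : ℤ} (I : IdealS Δ) : Prop :=
  I.Nonzero ∧ ∀ J : IdealS Δ, J.Nonzero → SameClass I J → I.norm ≤ J.norm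

/-- The inverse fractional ideal 𝔟⁻¹ = {x ∈ ℂ : x·𝔟 ⊆ 𝒪}. -/
def invSet {Δ : ℤ} (I : IdealS Δ) : Set ℂ :=
  {x : ℂ | ∀ y ∈ I.carrier, x * y ∈ (O Δ : Set ℂ)}

/-- The fractional ideal a·𝔟 + b·𝔟⁻¹, as a subset of ℂ. -/
def combSet {Δ : ℤ} (I : IdealS Δ) (a b : ℂ) : Set ℂ :=
  {u : ℂ | ∃ s ∈ I.carrier, ∃ t ∈ invSet I, u = a * s + b * t}

/-- The ideal x·𝒪 + y·𝒪 of 𝒪 generated by x and y, as a subset of ℂ. -/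
def genSet (Δ : ℤ) (x y : ℂ) : Set ℂ :=
  {u : ℂ | ∃ s ∈ (O Δ : Set ℂ), ∃ t ∈ (O Δ : Set ℂ), u = x * s + y * t}

/-- The set is the carrier of a reduced ideal of 𝒪. -/
def IsReducedSet (Δ : ℤ) (S : Set ℂ) : Prop :=
  ∃ J : IdealS Δ, IsReduced J ∧ J.carrier = S

/-- B is admissible with ε ∈ (0,1): B is a nonempty finite subset of 𝒪 ∖ {0}, and for every
reduced ideal 𝔟 with 𝔟 ∩ B ≠ ∅, the discs D(a/b, ε/|b|) over b ∈ 𝔟 ∩ B, a ∈ 𝔟⁻¹ with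
a·𝔟 + b·𝔟⁻¹ reduced, cover ℂ. -/
def Admissible (Δ : ℤ) (B : Set ℂ) (ε : ℝ) : Prop :=
  B.Nonempty ∧ B.Finite ∧ B ⊆ (O Δ : Set ℂ) ∧ (0 : ℂ) ∉ B ∧
  ∀ I : IdealS Δ, IsReduced I → (I.carrier ∩ B).Nonempty →
    ∀ z : ℂ, ∃ b ∈ I.carrier ∩ B, ∃ a ∈ invSet I,
      IsReducedSet Δ (combSet I a b) ∧ ‖z - a / b‖ ≤ ε / ‖b‖

/-- μ = max{|b| : b ∈ B}. -/
def mu (B : Set ℂ) : ℝ := sSup ((fun w : ℂ => ‖w‖) '' B)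

/-- A run of the continued fraction algorithm of length N ∈ ℕ ∪ {∞} on input z. -/
structure Run (Δ : ℤ) (B : Set ℂ) (ε : ℝ) (z : ℂ) (N : ℕ∞) where
  a : ℤ → ℂ
  b : ℤ → ℂ
  p : ℤ → ℂ
  q : ℤ → ℂ
  zs : ℤ → ℂ
  b_zero : b 0 = 1
  p_neg_one : p (-1) = 0
  q_neg_one : q (-1) = 1
  p_zero : p 0 = 1
  q_zero : q 0 = 0
  zs_zero : zs 0 = z
  ha : ∀ n : ℕ, 1 ≤ n → (n : ℕ∞) ≤ N → a n ∈ O Δ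
  hb : ∀ n : ℕ, 1 ≤ n → (n : ℕ∞) ≤ N → b n ∈ B
  hne : ∀ n : ℕ, 1 ≤ n → (n : ℕ∞) ≤ N → b n * zs ((n : ℤ) - 1) - a n ≠ 0
  hclose : ∀ n : ℕ, 1 ≤ n → (n : ℕ∞) ≤ N →
    ‖b n * zs ((n : ℤ) - 1) - a n‖ ≤ ε * ‖b ((n : ℤ) - 1)‖
  hp : ∀ n : ℕ, 1 ≤ n → (n : ℕ∞) ≤ N →
    p n = (a n * p ((n : ℤ) - 1) + b n * p ((n : ℤ) - 2)) / b ((n : ℤ) - 1)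
  hq : ∀ n : ℕ, 1 ≤ n → (n : ℕ∞) ≤ N →
    q n = (a n * q ((n : ℤ) - 1) + b n * q ((n : ℤ) - 2)) / b ((n : ℤ) - 1)
  hz : ∀ n : ℕ, 1 ≤ n → (n : ℕ∞) ≤ N →
    zs n = b ((n : ℤ) - 1) / (b n * zs ((n : ℤ) - 1) - a n)
  hpO : ∀ n : ℕ, 1 ≤ n → (n : ℕ∞) ≤ N → p n ∈ O Δ
  hqO : ∀ n : ℕ, 1 ≤ n → (n : ℕ∞) ≤ N → q n ∈ O Δ
  hred : ∀ n : ℕ, 1 ≤ n → (n : ℕ∞) ≤ N → IsReducedSet Δ (genSet Δ (p n) (q n))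

/-! Write `E k = q k · z - p k` (`Run.err`). Both `p` and `q` satisfy the recurrence
`b (n-1) · x n = a n · x (n-1) + b n · x (n-2)`, hence so does `E`; the initial values give
`E (-1) + z₀ · E 0 = 0`, and this relation propagates to `E (n-1) + zₙ · E n = 0` for all `n`.
Feeding it back into the recurrence gives `E n = -(bₙ zₙ₋₁ - aₙ) · E (n-1) / bₙ₋₁`, and the run's
requirement `0 < |bₙ zₙ₋₁ - aₙ| ≤ ε |bₙ₋₁|` both makes the division by `bₙ₋₁` legitimate and
turns this into `|E n| ≤ ε |E (n-1)|`. -/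

lemma natCast_succ_sub_one (m : ℕ) : ((m + 1 : ℕ) : ℤ) - 1 = m := by
  push_cast; ring

lemma natCast_succ_sub_two (m : ℕ) : ((m + 1 : ℕ) : ℤ) - 2 = (m : ℤ) - 1 := by
  push_cast; ring

lemma natCast_le_of_succ_le {m : ℕ} {N : ℕ∞} (hN : ((m + 1 : ℕ) : ℕ∞) ≤ N) : (m : ℕ∞) ≤ N :=
  le_trans (by exact_mod_cast Nat.le_succ m) hN

namespace Run

variable {Δ : ℤ} {B : Set ℂ} {ε : ℝ} {z : ℂ} {N : ℕ∞} (R : Run Δ B ε z N)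

def err (k : ℤ) : ℂ := R.q k * z - R.p k

lemma b_ne_zero {m : ℕ} (hN : ((m + 1 : ℕ) : ℕ∞) ≤ N) : R.b m ≠ 0 := by
  have hd := R.hne (m + 1) (Nat.le_add_left 1 m) hN
  have hclose := R.hclose (m + 1) (Nat.le_add_left 1 m) hN
  rw [natCast_succ_sub_one] at hd hclose
  intro hb
  rw [hb, norm_zero, mul_zero] at hclose
  exact hd (norm_le_zero_iff.mp hclose)

lemma err_succ_of_err_pred {m : ℕ} (hN : ((m + 1 : ℕ) : ℕ∞) ≤ N)
    (hpred : R.err ((m : ℤ) - 1) = -R.zs m * R.err m) :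
    R.err (m + 1 : ℕ) = -(R.b (m + 1 : ℕ) * R.zs m - R.a (m + 1 : ℕ)) * R.err m / R.b m := by
  have hq := R.hq (m + 1) (Nat.le_add_left 1 m) hN
  have hp := R.hp (m + 1) (Nat.le_add_left 1 m) hN
  rw [natCast_succ_sub_one, natCast_succ_sub_two] at hq hp
  have hb := R.b_ne_zero hN
  unfold err at hpred ⊢
  rw [hq, hp]
  field_simp
  linear_combination R.b (m + 1 : ℕ) * hpred

lemma err_pred_eq : ∀ n : ℕ, (n : ℕ∞) ≤ N → R.err ((n : ℤ) - 1) = -R.zs n * R.err n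
  | 0, _ => by simp [err, R.q_neg_one, R.p_neg_one, R.q_zero, R.p_zero, R.zs_zero]
  | m + 1, hN => by
    have hsucc := R.err_succ_of_err_pred hN (err_pred_eq m (natCast_le_of_succ_le hN))
    have hz := R.hz (m + 1) (Nat.le_add_left 1 m) hN
    have hd := R.hne (m + 1) (Nat.le_add_left 1 m) hN
    rw [natCast_succ_sub_one] at hz hd ⊢
    have hb := R.b_ne_zero hN
    rw [hsucc, hz]
    field_simp

lemma err_succ {m : ℕ} (hN : ((m + 1 : ℕ) : ℕ∞) ≤ N) :
    R.err (m + 1 : ℕ) = -(R.b (m + 1 : ℕ) * R.zs m - R.a (m + 1 : ℕ)) * R.err m / R.b m :=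
  R.err_succ_of_err_pred hN (R.err_pred_eq m (natCast_le_of_succ_le hN))

lemma norm_err_succ_le {m : ℕ} (hN : ((m + 1 : ℕ) : ℕ∞) ≤ N) :
    ‖R.err (m + 1 : ℕ)‖ ≤ ε * ‖R.err m‖ := by
  have hclose := R.hclose (m + 1) (Nat.le_add_left 1 m) hN
  rw [natCast_succ_sub_one] at hclose
  have hb : 0 < ‖R.b m‖ := norm_pos_iff.mpr (R.b_ne_zero hN)
  rw [R.err_succ hN, norm_div, norm_mul, norm_neg, div_le_iff₀ hb]
  calc ‖R.b (m + 1 : ℕ) * R.zs m - R.a (m + 1 : ℕ)‖ * ‖R.err m‖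
      ≤ ε * ‖R.b m‖ * ‖R.err m‖ := by gcongr
    _ = ε * ‖R.err m‖ * ‖R.b m‖ := by ring

lemma norm_err_le_pow (hε : 0 ≤ ε) : ∀ n : ℕ, (n : ℕ∞) ≤ N → ‖R.err n‖ ≤ ε ^ n
  | 0, _ => by simp [err, R.q_zero, R.p_zero]
  | m + 1, hN =>
    calc ‖R.err (m + 1 : ℕ)‖ ≤ ε * ‖R.err m‖ := R.norm_err_succ_le hN
      _ ≤ ε * ε ^ m := by
        gcongr
        exact norm_err_le_pow hε m (natCast_le_of_succ_le hN)
      _ = ε ^ (m + 1) := by ring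

end Run

theorem stmt1_general (Δ : ℤ)
    (B : Set ℂ) (ε : ℝ) (hε0 : 0 < ε)
    (z : ℂ) (N : ℕ∞) (R : Run Δ B ε z N)
    (n : ℕ) (hn : 1 ≤ n) (hnN : (n : ℕ∞) ≤ N) :
    ‖R.q n * z - R.p n‖ ≤
      ε * ‖R.q ((n : ℤ) - 1) * z - R.p ((n : ℤ) - 1)‖ ∧
    ‖R.q n * z - R.p n‖ ≤ ε ^ n := by
  obtain ⟨m, rfl⟩ : ∃ m, n = m + 1 := ⟨n - 1, by omega⟩
  refine ⟨?_, R.norm_err_le_pow hε0.le (m + 1) hnN⟩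
  rw [natCast_succ_sub_one]
  exact R.norm_err_succ_le hnN

theorem stmt1 (Δ : ℤ) (hΔneg : Δ < 0) (hΔmod : Δ % 4 = 0 ∨ Δ % 4 = 1)
    (B : Set ℂ) (ε : ℝ) (hε0 : 0 < ε) (hε1 : ε < 1) (hadm : Admissible Δ B ε)
    (z : ℂ) (N : ℕ∞) (R : Run Δ B ε z N)
    (n : ℕ) (hn : 1 ≤ n) (hnN : (n : ℕ∞) ≤ N) :
    ‖R.q n * z - R.p n‖ ≤
      ε * ‖R.q ((n : ℤ) - 1) * z - R.p ((n : ℤ) - 1)‖ ∧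
    ‖R.q n * z - R.p n‖ ≤ ε ^ n :=
  stmt1_general Δ B ε hε0 z N R n hn hnN

end CFNE
end
end

section
/- In any run of the continued fraction algorithm of length N ∈ ℕ ∪ {∞} on input z ∈ ℂ, for every 1 ≤ n ≤ N one has |1 + q_{n−1}/(q_n·z_n)| > (1 − ε²)·|b_n| / μ. -/
noncomputable section

namespace CFNE

lemma le_mu {Δ : ℤ} {B : Set ℂ} {ε : ℝ} (hadm : Admissible Δ B ε) {b : ℂ} (hb : b ∈ B) :
    ‖b‖ ≤ mu B :=
  le_csSup (hadm.2.1.image _).bddAbove ⟨b, hb, rfl⟩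

lemma mu_pos {Δ : ℤ} {B : Set ℂ} {ε : ℝ} (hadm : Admissible Δ B ε) : 0 < mu B := by
  obtain ⟨b0, hb0⟩ := hadm.1
  have hne : b0 ≠ 0 := fun h => hadm.2.2.2.1 (h ▸ hb0)
  exact lt_of_lt_of_le (by simpa using hne) (le_mu hadm hb0)

lemma b_ne_zero {Δ : ℤ} {B : Set ℂ} {ε : ℝ} {z : ℂ} {N : ℕ∞}
    (hadm : Admissible Δ B ε) (R : Run Δ B ε z N) (k : ℕ) (hk : (k : ℕ∞) ≤ N) :
    R.b k ≠ 0 := by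
  rcases Nat.eq_zero_or_pos k with h | h
  · subst h
    simp only [Nat.cast_zero, R.b_zero]
    exact one_ne_zero
  · intro h0
    exact hadm.2.2.2.1 (h0 ▸ R.hb k h hk)

lemma invariant {Δ : ℤ} {B : Set ℂ} {ε : ℝ} {z : ℂ} {N : ℕ∞}
    (hε0 : 0 < ε) (hε1 : ε < 1) (hadm : Admissible Δ B ε) (R : Run Δ B ε z N) :
    ∀ n : ℕ, 1 ≤ n → (n : ℕ∞) ≤ N →
    (R.q ((n : ℤ) - 1) * z - R.p ((n : ℤ) - 1)) = -(R.zs n) * (R.q n * z - R.p n) ∧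
    (R.q n * z - R.p n) ≠ 0 ∧
    ‖R.q n * z - R.p n‖ ≤
      ε * ‖R.q ((n : ℤ) - 1) * z - R.p ((n : ℤ) - 1)‖ ∧
    R.p n * R.q ((n : ℤ) - 1) - R.p ((n : ℤ) - 1) * R.q n = (-1) ^ n * R.b n ∧
    ‖R.q n * (R.q ((n : ℤ) - 1) * z - R.p ((n : ℤ) - 1))‖ < mu B / (1 - ε ^ 2) := by
  have hmu : 0 < mu B := mu_pos hadm
  have h1e : 0 < 1 - ε ^ 2 := by nlinarith
  intro n hn
  induction n, hn using Nat.le_induction with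
  | base =>
    intro hN
    have hq1 := R.hq 1 le_rfl hN
    have hp1 := R.hp 1 le_rfl hN
    have hz1 := R.hz 1 le_rfl hN
    have hne1 := R.hne 1 le_rfl hN
    have hcl1 := R.hclose 1 le_rfl hN
    have hb1 : R.b 1 ∈ B := by have := R.hb 1 le_rfl hN; simpa using this
    simp only [Nat.cast_one, show (1:ℤ) - 1 = 0 from rfl, show (1:ℤ) - 2 = -1 from rfl,
      R.q_zero, R.q_neg_one, R.p_zero, R.p_neg_one, R.b_zero, R.zs_zero,
      mul_zero, mul_one, zero_add, add_zero, div_one, zero_mul, zero_sub] at *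
    rw [hq1, hp1]
    refine ⟨?_, ?_, ?_, ?_, ?_⟩
    · rw [hz1]
      field_simp
    · exact hne1
    · simpa using hcl1
    · ring
    · have : ‖R.b 1 * -1‖ = ‖R.b 1‖ := by
        simp
      rw [this]
      have hb1le := le_mu hadm hb1
      have : mu B < mu B / (1 - ε ^ 2) := by
        rw [lt_div_iff₀ h1e]; nlinarith [mul_pos hmu (pow_pos hε0 2)]
      linarith
  | succ n hn ih =>
    intro hN
    have hnN : (n : ℕ∞) ≤ N := le_trans (by exact_mod_cast Nat.le_succ n) hN
    obtain ⟨ihA, ihB, ihC, ihD, ihX⟩ := ih hnN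
    have hn1 : 1 ≤ n + 1 := Nat.le_add_left 1 n
    have c1 : ((n + 1 : ℕ) : ℤ) - 1 = (n : ℤ) := by push_cast; ring
    have c2 : ((n + 1 : ℕ) : ℤ) - 2 = (n : ℤ) - 1 := by push_cast; ring
    have hq' := R.hq (n+1) hn1 hN
    have hp' := R.hp (n+1) hn1 hN
    have hz' := R.hz (n+1) hn1 hN
    have hne' := R.hne (n+1) hn1 hN
    have hcl' := R.hclose (n+1) hn1 hN
    rw [c1] at hq' hp' hz' hne' hcl' ⊢
    rw [c2] at hq' hp'
    have hbn : R.b n ≠ 0 := b_ne_zero hadm R n hnN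
    have hbn1 : R.b (n+1) ∈ B := R.hb (n+1) hn1 hN
    set d : ℂ := R.b ↑(n+1) * R.zs ↑n - R.a ↑(n+1) with hd
    have hqm : R.q ↑(n+1) * R.b ↑n =
        R.a ↑(n+1) * R.q ↑n + R.b ↑(n+1) * R.q (↑n - 1) := by
      rw [hq', div_mul_cancel₀ _ hbn]
    have hpm : R.p ↑(n+1) * R.b ↑n =
        R.a ↑(n+1) * R.p ↑n + R.b ↑(n+1) * R.p (↑n - 1) := by
      rw [hp', div_mul_cancel₀ _ hbn]
    have hzm : R.zs ↑(n+1) * d = R.b ↑n := by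
      rw [hz', div_mul_cancel₀ _ hne']
    -- key step identity
    have hstep : (R.q ↑(n+1) * z - R.p ↑(n+1)) * R.b ↑n =
        -d * (R.q ↑n * z - R.p ↑n) := by
      linear_combination z * hqm - hpm + (R.b ↑(n+1)) * ihA +
        (R.q ↑n * z - R.p ↑n) * hd
    have hstep' : R.q ↑(n+1) * z - R.p ↑(n+1) =
        -d * (R.q ↑n * z - R.p ↑n) / R.b ↑n := by
      rw [eq_div_iff hbn]; exact hstep
    have hBnew : (R.q ↑(n+1) * z - R.p ↑(n+1)) ≠ 0 := by
      rw [hstep']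
      exact div_ne_zero (mul_ne_zero (neg_ne_zero.mpr hne') ihB) hbn
    have hAnew : R.q ↑n * z - R.p ↑n =
        -(R.zs ↑(n+1)) * (R.q ↑(n+1) * z - R.p ↑(n+1)) := by
      apply mul_right_cancel₀ hbn
      linear_combination (R.zs ↑(n+1)) * hstep - (R.q ↑n * z - R.p ↑n) * hzm
    have hCnew : ‖R.q ↑(n+1) * z - R.p ↑(n+1)‖ ≤
        ε * ‖R.q ↑n * z - R.p ↑n‖ := by
      have h1 : ‖R.q ↑(n+1) * z - R.p ↑(n+1)‖ * ‖R.b ↑n‖ =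
          ‖d‖ * ‖R.q ↑n * z - R.p ↑n‖ := by
        rw [← norm_mul, ← norm_mul, hstep]
        simp [norm_mul]
      have hb0 : 0 < ‖R.b ↑n‖ := by
        simpa using (norm_pos_iff.mpr hbn)
      have hE0 : 0 ≤ ‖R.q ↑n * z - R.p ↑n‖ := norm_nonneg _
      nlinarith [hcl', norm_nonneg d,
        norm_nonneg (R.q ↑(n+1) * z - R.p ↑(n+1))]
    have hDnew : R.p ↑(n+1) * R.q ↑n - R.p ↑n * R.q ↑(n+1) = (-1) ^ (n+1) * R.b ↑(n+1) := by
      apply mul_right_cancel₀ hbn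
      linear_combination R.q ↑n * hpm - R.p ↑n * hqm - (R.b ↑(n+1)) * ihD
    refine ⟨hAnew, hBnew, hCnew, hDnew, ?_⟩
    -- X bound
    have hid : R.q ↑(n+1) * (R.q ↑n * z - R.p ↑n) =
        (-1) ^ (n+1) * R.b ↑(n+1) + R.q ↑n * (R.q ↑(n+1) * z - R.p ↑(n+1)) := by
      linear_combination hDnew
    have habs1 : ‖R.q ↑(n+1) * (R.q ↑n * z - R.p ↑n)‖ ≤
        ‖R.b ↑(n+1)‖ +
        ‖R.q ↑n‖ * ‖R.q ↑(n+1) * z - R.p ↑(n+1)‖ := by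
      rw [hid]
      refine le_trans (norm_add_le _ _) ?_
      rw [norm_mul, norm_mul]
      simp
    have hq0 : 0 ≤ ‖R.q ↑n‖ := norm_nonneg _
    have h3 : ‖R.q ↑n‖ * ‖R.q (↑n - 1) * z - R.p (↑n - 1)‖ =
        ‖R.q ↑n * (R.q (↑n - 1) * z - R.p (↑n - 1))‖ := (norm_mul _ _).symm
    have h2 : ‖R.q ↑n‖ * ‖R.q ↑(n+1) * z - R.p ↑(n+1)‖ ≤
        ε ^ 2 * ‖R.q ↑n * (R.q (↑n - 1) * z - R.p (↑n - 1))‖ := by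
      rw [← h3]
      calc ‖R.q ↑n‖ * ‖R.q ↑(n+1) * z - R.p ↑(n+1)‖ ≤
          ‖R.q ↑n‖ *
            (ε * (ε * ‖R.q (↑n - 1) * z - R.p (↑n - 1)‖)) := by
            apply mul_le_mul_of_nonneg_left _ hq0
            refine le_trans hCnew ?_
            exact mul_le_mul_of_nonneg_left ihC (le_of_lt hε0)
        _ = ε ^ 2 * (‖R.q ↑n‖ *
            ‖R.q (↑n - 1) * z - R.p (↑n - 1)‖) := by ring
    have hble : ‖R.b ↑(n+1)‖ ≤ mu B := le_mu hadm hbn1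
    have hXbd : ‖R.q ↑n * (R.q (↑n - 1) * z - R.p (↑n - 1))‖ < mu B / (1 - ε^2) :=
      ihX
    rw [lt_div_iff₀ h1e]
    rw [lt_div_iff₀ h1e] at hXbd
    have hfin : ‖R.q ↑(n+1) * (R.q ↑n * z - R.p ↑n)‖ ≤
        mu B + ε ^ 2 * ‖R.q ↑n * (R.q (↑n - 1) * z - R.p (↑n - 1))‖ := by
      linarith
    nlinarith [mul_lt_mul_of_pos_left hXbd (pow_pos hε0 2),
      mul_le_mul_of_nonneg_right hfin (le_of_lt h1e)]

theorem stmt4 (Δ : ℤ) (hΔneg : Δ < 0) (hΔmod : Δ % 4 = 0 ∨ Δ % 4 = 1)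
    (B : Set ℂ) (ε : ℝ) (hε0 : 0 < ε) (hε1 : ε < 1) (hadm : Admissible Δ B ε)
    (z : ℂ) (N : ℕ∞) (R : Run Δ B ε z N)
    (n : ℕ) (hn : 1 ≤ n) (hnN : (n : ℕ∞) ≤ N) :
    (1 - ε ^ 2) * ‖R.b n‖ / mu B <
      ‖1 + R.q ((n : ℤ) - 1) / (R.q n * R.zs n)‖ := by
  have hmu : 0 < mu B := mu_pos hadm
  have h1e : 0 < 1 - ε ^ 2 := by nlinarith
  obtain ⟨hA, hB2, hC, hD, hX⟩ := invariant hε0 hε1 hadm R n hn hnN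
  have hbnB : R.b n ∈ B := R.hb n hn hnN
  have hbpos : 0 < ‖R.b n‖ := by
    simpa using norm_pos_iff.mpr (fun h => hadm.2.2.2.1 (h ▸ hbnB) : R.b (n:ℤ) ≠ 0)
  have hble : ‖R.b n‖ ≤ mu B := le_mu hadm hbnB
  by_cases hQZ : R.q n * R.zs n = 0
  · rw [hQZ, div_zero, add_zero]
    simp only [norm_one]
    rw [div_lt_iff₀ hmu]
    nlinarith [mul_pos (pow_pos hε0 2) hbpos]
  · have hQ : R.q (n:ℤ) ≠ 0 := left_ne_zero_of_mul hQZ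
    have hZ : R.zs (n:ℤ) ≠ 0 := right_ne_zero_of_mul hQZ
    have he' : R.q ((n:ℤ)-1) * z - R.p ((n:ℤ)-1) ≠ 0 := by
      rw [hA]; exact mul_ne_zero (neg_ne_zero.mpr hZ) hB2
    have hXpos : 0 < ‖R.q n * (R.q ((n:ℤ)-1) * z - R.p ((n:ℤ)-1))‖ := by
      exact norm_pos_iff.mpr (mul_ne_zero hQ he')
    -- numerator identity
    have h2 : (R.q n * R.zs n + R.q ((n:ℤ)-1)) * (R.q n * z - R.p n) =
        -((-1)^n * R.b n) := by
      linear_combination (R.q (n:ℤ)) * hA - hD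
    -- Q*Z identity
    have h3 : (R.q n * R.zs n) * (R.q n * z - R.p n) =
        -(R.q n * (R.q ((n:ℤ)-1) * z - R.p ((n:ℤ)-1))) := by
      linear_combination (R.q (n:ℤ)) * hA
    have hform : 1 + R.q ((n:ℤ)-1) / (R.q n * R.zs n) =
        (R.q n * R.zs n + R.q ((n:ℤ)-1)) / (R.q n * R.zs n) := by
      field_simp
    rw [hform, norm_div]
    have hE : ‖R.q n * z - R.p n‖ ≠ 0 := norm_ne_zero_iff.mpr hB2
    have hnum : ‖R.q n * R.zs n + R.q ((n:ℤ)-1)‖ =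
        ‖R.b n‖ / ‖R.q n * z - R.p n‖ := by
      rw [eq_div_iff hE, ← norm_mul, h2]
      simp [norm_mul]
    have hden : ‖R.q n * R.zs n‖ =
        ‖R.q n * (R.q ((n:ℤ)-1) * z - R.p ((n:ℤ)-1))‖ /
          ‖R.q n * z - R.p n‖ := by
      rw [eq_div_iff hE, ← norm_mul, h3]
      simp
    rw [hnum, hden]
    have hEpos : 0 < ‖R.q n * z - R.p n‖ := norm_pos_iff.mpr hB2
    have hsim : ‖R.b (n:ℤ)‖ / ‖R.q n * z - R.p n‖ /
        (‖R.q n * (R.q ((n:ℤ)-1) * z - R.p ((n:ℤ)-1))‖ /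
          ‖R.q n * z - R.p n‖) =
        ‖R.b (n:ℤ)‖ /
          ‖R.q n * (R.q ((n:ℤ)-1) * z - R.p ((n:ℤ)-1))‖ := by
      rw [div_div_div_comm, div_self hE, div_one]
    rw [hsim]
    rw [div_lt_div_iff₀ hmu hXpos]
    rw [lt_div_iff₀ h1e] at hX
    nlinarith


end CFNE
end
end

section
/- Let an infinite run (N = ∞) of the continued fraction algorithm on input z ∈ ℂ be given. Then the set {z_n : n ≥ 0} is finite if and only if z is a root of a nonzero polynomial of degree at most 2 with coefficients in 𝒪 (i.e., there exist A, B, C ∈ 𝒪, not all zero, with A·z² + B·z + C = 0; equivalently, z generates an extension of degree at most 2 of the field ℚ(τ)). -/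
noncomputable section

namespace CFNE

/-- the absolute value of ℂ, i.e. the norm -/
def Complex.abs : AbsoluteValue ℂ ℝ := NormedField.toAbsoluteValue ℂ

lemma Complex.abs_two : Complex.abs 2 = 2 := by
  show ‖(2:ℂ)‖ = 2
  simp

lemma tau_sq {Δ : ℤ} (hΔneg : Δ < 0) :
    tau Δ ^ 2 = (Δ : ℂ) * tau Δ - ((Δ : ℂ) ^ 2 - Δ) / 4 := by
  have hs : ((Real.sqrt |(Δ : ℝ)| : ℝ) : ℂ) ^ 2 = -(Δ : ℂ) := by
    rw [← Complex.ofReal_pow, Real.sq_sqrt (abs_nonneg _)]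
    have : |(Δ : ℝ)| = -(Δ : ℝ) := abs_of_neg (by exact_mod_cast hΔneg)
    rw [this]; push_cast; ring
  unfold tau
  linear_combination (Complex.I ^ 2 / 4) * hs + (-(Δ:ℂ)/4) * Complex.I_sq

/-- the subring ℤ + ℤτ -/
def Ospan (Δ : ℤ) : Set ℂ := {x | ∃ m n : ℤ, x = (m : ℂ) + (n : ℂ) * tau Δ}

lemma cdiv {Δ : ℤ} (hΔmod : Δ % 4 = 0 ∨ Δ % 4 = 1) :
    ∃ c : ℤ, (c : ℂ) = ((Δ : ℂ) ^ 2 - Δ) / 4 := by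
  have h4 : (4 : ℤ) ∣ Δ ^ 2 - Δ := by
    rcases hΔmod with h | h
    · obtain ⟨k, rfl⟩ : ∃ k, Δ = 4 * k := ⟨Δ / 4, by omega⟩
      exact ⟨4 * k ^ 2 - k, by ring⟩
    · obtain ⟨k, rfl⟩ : ∃ k, Δ = 4 * k + 1 := ⟨Δ / 4, by omega⟩
      exact ⟨4 * k ^ 2 + k, by ring⟩
  obtain ⟨c, hc⟩ := h4
  refine ⟨c, ?_⟩
  have : ((Δ ^ 2 - Δ : ℤ) : ℂ) = ((4 * c : ℤ) : ℂ) := congrArg (Int.cast : ℤ → ℂ) hc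
  push_cast at this
  field_simp
  linear_combination -this

lemma mem_O_iff {Δ : ℤ} (hΔneg : Δ < 0) (hΔmod : Δ % 4 = 0 ∨ Δ % 4 = 1) (x : ℂ) :
    x ∈ O Δ → ∃ m n : ℤ, x = (m : ℂ) + (n : ℂ) * tau Δ := by
  obtain ⟨c, hc⟩ := cdiv hΔmod
  have htau2 : tau Δ ^ 2 = (Δ : ℂ) * tau Δ - c := by rw [hc]; exact tau_sq hΔneg
  intro hx
  have : x ∈ Subring.closure {tau Δ} := hx
  induction this using Subring.closure_induction with
  | mem y hy =>
    rcases hy with rfl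
    exact ⟨0, 1, by push_cast; ring⟩
  | one => exact ⟨1, 0, by push_cast; ring⟩
  | zero => exact ⟨0, 0, by push_cast; ring⟩
  | add a b hma hmb ha hb =>
    obtain ⟨m, n, rfl⟩ := ha hma; obtain ⟨m', n', rfl⟩ := hb hmb
    exact ⟨m + m', n + n', by push_cast; ring⟩
  | neg a hma ha =>
    obtain ⟨m, n, rfl⟩ := ha hma
    exact ⟨-m, -n, by push_cast; ring⟩
  | mul a b hma hmb ha hb =>
    obtain ⟨m, n, rfl⟩ := ha hma; obtain ⟨m', n', rfl⟩ := hb hmb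
    refine ⟨m * m' - n * n' * c, m * n' + n * m' + n * n' * Δ, ?_⟩
    push_cast
    linear_combination ((n : ℂ) * n') * htau2

lemma im_tau {Δ : ℤ} : (tau Δ).im = Real.sqrt |(Δ : ℝ)| / 2 := by
  simp [tau, Complex.div_im, Complex.add_im, Complex.mul_im]

lemma im_tau_pos {Δ : ℤ} (hΔneg : Δ < 0) : 0 < (tau Δ).im := by
  rw [im_tau]
  have : (0:ℝ) < |(Δ : ℝ)| := by
    have : (Δ : ℝ) ≠ 0 := by exact_mod_cast hΔneg.ne
    positivity
  positivity

lemma O_discrete {Δ : ℤ} (hΔneg : Δ < 0) (hΔmod : Δ % 4 = 0 ∨ Δ % 4 = 1) (M : ℝ) :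
    {w : ℂ | w ∈ O Δ ∧ Complex.abs w ≤ M}.Finite := by
  set t := tau Δ with ht
  have him : 0 < t.im := im_tau_pos hΔneg
  set K : ℤ := ⌈M / t.im⌉ with hK
  set K2 : ℤ := ⌈M + (K : ℝ) * |t.re|⌉ with hK2
  have hsub : {w : ℂ | w ∈ O Δ ∧ Complex.abs w ≤ M} ⊆
      (fun p : ℤ × ℤ => (p.1 : ℂ) + (p.2 : ℂ) * t) '' (Set.Icc (-K2) K2 ×ˢ Set.Icc (-K) K) := by
    rintro w ⟨hwO, hwM⟩
    obtain ⟨m, n, rfl⟩ := mem_O_iff hΔneg hΔmod w hwO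
    have hre : ((m : ℂ) + (n : ℂ) * t).re = (m : ℝ) + (n : ℝ) * t.re := by simp
    have him' : ((m : ℂ) + (n : ℂ) * t).im = (n : ℝ) * t.im := by simp
    have habs_im : |(n : ℝ) * t.im| ≤ M := by
      rw [← him']
      exact (Complex.abs_im_le_norm _).trans hwM
    have hn : |(n : ℝ)| ≤ M / t.im := by
      rw [abs_mul, abs_of_pos him] at habs_im
      rw [le_div_iff₀ him]
      exact habs_im
    have hnK : |(n : ℝ)| ≤ (K : ℝ) := hn.trans (Int.le_ceil _)
    have hnK' : -K ≤ n ∧ n ≤ K := by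
      rw [abs_le] at hnK
      exact ⟨by exact_mod_cast hnK.1, by exact_mod_cast hnK.2⟩
    have habs_re : |(m : ℝ) + (n : ℝ) * t.re| ≤ M := by
      rw [← hre]
      exact (Complex.abs_re_le_norm _).trans hwM
    have hm : |(m : ℝ)| ≤ M + (K : ℝ) * |t.re| := by
      have h1 : |(m : ℝ)| ≤ |(m : ℝ) + (n : ℝ) * t.re| + |(n : ℝ) * t.re| := by
        calc |(m : ℝ)| = |((m : ℝ) + (n : ℝ) * t.re) - (n : ℝ) * t.re| := by ring_nf
        _ ≤ _ := abs_sub _ _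
      have h2 : |(n : ℝ) * t.re| ≤ (K : ℝ) * |t.re| := by
        rw [abs_mul]
        exact mul_le_mul_of_nonneg_right hnK (abs_nonneg _)
      linarith
    have hmK : |(m : ℝ)| ≤ (K2 : ℝ) := hm.trans (Int.le_ceil _)
    have hmK' : -K2 ≤ m ∧ m ≤ K2 := by
      rw [abs_le] at hmK
      exact ⟨by exact_mod_cast hmK.1, by exact_mod_cast hmK.2⟩
    exact ⟨(m, n), ⟨⟨hmK'.1, hmK'.2⟩, ⟨hnK'.1, hnK'.2⟩⟩, rfl⟩
  exact Set.Finite.subset (((Set.finite_Icc _ _).prod (Set.finite_Icc _ _)).image _) hsub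


section RunLemmas

variable {Δ : ℤ} {B : Set ℂ} {ε : ℝ} {z : ℂ}

def P (R : Run Δ B ε z ⊤) : ℕ → ℂ := fun n => R.p n
def P' (R : Run Δ B ε z ⊤) : ℕ → ℂ := fun n => R.p ((n:ℤ)-1)
def Q (R : Run Δ B ε z ⊤) : ℕ → ℂ := fun n => R.q n
def Q' (R : Run Δ B ε z ⊤) : ℕ → ℂ := fun n => R.q ((n:ℤ)-1)
def Bb (R : Run Δ B ε z ⊤) : ℕ → ℂ := fun n => R.b n
def Aa (R : Run Δ B ε z ⊤) : ℕ → ℂ := fun n => R.a n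
def Z (R : Run Δ B ε z ⊤) : ℕ → ℂ := fun n => R.zs n

variable (R : Run Δ B ε z ⊤)

lemma P'_succ (n : ℕ) : P' R (n+1) = P R n := by
  show R.p _ = R.p _; congr 1; push_cast; ring

lemma Q'_succ (n : ℕ) : Q' R (n+1) = Q R n := by
  show R.q _ = R.q _; congr 1; push_cast; ring

lemma P'_zero : P' R 0 = 0 := by
  show R.p _ = 0
  rw [show ((0:ℕ):ℤ) - 1 = -1 by norm_num]; exact R.p_neg_one

lemma Q'_zero : Q' R 0 = 1 := by
  show R.q _ = 1
  rw [show ((0:ℕ):ℤ) - 1 = -1 by norm_num]; exact R.q_neg_one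

lemma P_zero : P R 0 = 1 := by
  show R.p _ = 1; rw [show ((0:ℕ):ℤ) = 0 by norm_num]; exact R.p_zero

lemma Q_zero : Q R 0 = 0 := by
  show R.q _ = 0; rw [show ((0:ℕ):ℤ) = 0 by norm_num]; exact R.q_zero

lemma Bb_zero : Bb R 0 = 1 := by
  show R.b _ = 1; rw [show ((0:ℕ):ℤ) = 0 by norm_num]; exact R.b_zero

lemma Z_zero : Z R 0 = z := by
  show R.zs _ = z; rw [show ((0:ℕ):ℤ) = 0 by norm_num]; exact R.zs_zero

lemma Bb_mem (n : ℕ) : Bb R (n+1) ∈ B := R.hb (n+1) (by omega) le_top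

lemma Bb_ne (hB0 : (0:ℂ) ∉ B) (n : ℕ) : Bb R n ≠ 0 := by
  cases n with
  | zero => rw [Bb_zero]; exact one_ne_zero
  | succ k => intro h; exact hB0 (h ▸ Bb_mem R k)

lemma P_mem (hΔ : True) (n : ℕ) : P R n ∈ O Δ := by
  cases n with
  | zero => rw [P_zero]; exact one_mem _
  | succ k => exact R.hpO (k+1) (by omega) le_top

lemma Q_mem (n : ℕ) : Q R n ∈ O Δ := by
  cases n with
  | zero => rw [Q_zero]; exact zero_mem _
  | succ k => exact R.hqO (k+1) (by omega) le_top

lemma recP (hB0 : (0:ℂ) ∉ B) (n : ℕ) :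
    Bb R n * P R (n+1) = Aa R (n+1) * P R n + Bb R (n+1) * P' R n := by
  have h := R.hp (n+1) (by omega) le_top
  have c1 : ((n+1:ℕ):ℤ) - 1 = (n:ℤ) := by push_cast; ring
  have c2 : ((n+1:ℕ):ℤ) - 2 = ((n:ℕ):ℤ) - 1 := by push_cast; ring
  rw [c1, c2] at h
  show R.b _ * R.p _ = R.a _ * R.p _ + R.b _ * R.p _
  rw [h, mul_comm]; exact div_mul_cancel₀ _ (Bb_ne R hB0 n)

lemma recQ (hB0 : (0:ℂ) ∉ B) (n : ℕ) :
    Bb R n * Q R (n+1) = Aa R (n+1) * Q R n + Bb R (n+1) * Q' R n := by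
  have h := R.hq (n+1) (by omega) le_top
  have c1 : ((n+1:ℕ):ℤ) - 1 = (n:ℤ) := by push_cast; ring
  have c2 : ((n+1:ℕ):ℤ) - 2 = ((n:ℕ):ℤ) - 1 := by push_cast; ring
  rw [c1, c2] at h
  show R.b _ * R.q _ = R.a _ * R.q _ + R.b _ * R.q _
  rw [h, mul_comm]; exact div_mul_cancel₀ _ (Bb_ne R hB0 n)

lemma recZ (n : ℕ) :
    Z R (n+1) = Bb R n / (Bb R (n+1) * Z R n - Aa R (n+1)) := by
  have h := R.hz (n+1) (by omega) le_top
  have c1 : ((n+1:ℕ):ℤ) - 1 = (n:ℤ) := by push_cast; ring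
  rw [c1] at h
  exact h

lemma neZ (n : ℕ) : Bb R (n+1) * Z R n - Aa R (n+1) ≠ 0 := by
  have h := R.hne (n+1) (by omega) le_top
  have c1 : ((n+1:ℕ):ℤ) - 1 = (n:ℤ) := by push_cast; ring
  rw [c1] at h
  exact h

lemma closeZ (n : ℕ) :
    Complex.abs (Bb R (n+1) * Z R n - Aa R (n+1)) ≤ ε * Complex.abs (Bb R n) := by
  have h := R.hclose (n+1) (by omega) le_top
  have c1 : ((n+1:ℕ):ℤ) - 1 = (n:ℤ) := by push_cast; ring
  rw [c1] at h
  exact h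

/-- e_n = q_n z - p_n, as ℕ-indexed; E' n = e_{n-1}. -/
def EE (R : Run Δ B ε z ⊤) : ℕ → ℂ := fun n => Q R n * z - P R n
def EE' (R : Run Δ B ε z ⊤) : ℕ → ℂ := fun n => Q' R n * z - P' R n

lemma EE'_succ (n : ℕ) : EE' R (n+1) = EE R n := by
  simp only [EE, EE', P'_succ, Q'_succ]

lemma EE'_zero : EE' R 0 = z := by
  simp only [EE', P'_zero, Q'_zero]; ring

lemma EE_zero : EE R 0 = -1 := by
  simp only [EE, P_zero, Q_zero]; ring

lemma recE (hB0 : (0:ℂ) ∉ B) (n : ℕ) :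
    Bb R n * EE R (n+1) = Aa R (n+1) * EE R n + Bb R (n+1) * EE' R n := by
  simp only [EE, EE']
  linear_combination z * recQ R hB0 n - recP R hB0 n

lemma key (hB0 : (0:ℂ) ∉ B) :
    ∀ n : ℕ, Z R (n+1) * EE R (n+1) = -(EE R n) ∧ EE R (n+1) ≠ 0 := by
  intro n
  induction n with
  | zero =>
    have hrec := recE R hB0 0
    rw [EE'_zero, EE_zero, Bb_zero, one_mul] at hrec
    -- EE R 1 = Bb 1 * z - Aa 1
    have hne := neZ R 0
    rw [Z_zero] at hne
    have hE1 : EE R 1 = Bb R 1 * z - Aa R 1 := by rw [hrec]; ring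
    have hz1 := recZ R 0
    rw [Z_zero, Bb_zero] at hz1
    refine ⟨?_, by rw [hE1]; exact hne⟩
    rw [hz1, hE1, EE_zero]
    field_simp
  | succ k ih =>
    have hrec := recE R hB0 (k+1)
    rw [EE'_succ] at hrec
    have hIH : EE R k = -(Z R (k+1) * EE R (k+1)) := by rw [ih.1]; ring
    have hne := neZ R (k+1)
    have hz2 := recZ R (k+1)
    set w := Bb R (k+2) * Z R (k+1) - Aa R (k+2) with hw
    have hEq : Bb R (k+1) * EE R (k+2) = -(w * EE R (k+1)) := by
      rw [hrec, hIH]; ring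
    have hb1 : Bb R (k+1) ≠ 0 := Bb_ne R hB0 (k+1)
    refine ⟨?_, ?_⟩
    · rw [hz2]
      rw [div_mul_eq_mul_div, div_eq_iff hne]
      linear_combination hEq
    · intro h0
      rw [h0, mul_zero] at hEq
      rcases mul_eq_zero.mp (neg_eq_zero.mp hEq.symm) with h | h
      · exact hne h
      · exact ih.2 h


lemma absZ_ge (hε0 : 0 < ε) (hB0 : (0:ℂ) ∉ B) (n : ℕ) :
    1 / ε ≤ Complex.abs (Z R (n+1)) := by
  have hz := recZ R n
  have hne := neZ R n
  have hcl := closeZ R n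
  have hbne : Complex.abs (Bb R n) ≠ 0 := by
    simpa using (Bb_ne R hB0 n)
  have hbpos : 0 < Complex.abs (Bb R n) := lt_of_le_of_ne (Complex.abs.nonneg _) (Ne.symm hbne)
  have hwpos : 0 < Complex.abs (Bb R (n+1) * Z R n - Aa R (n+1)) := by
    simpa using hne
  rw [hz, map_div₀]
  rw [div_le_div_iff₀ hε0 hwpos]
  calc 1 * Complex.abs (Bb R (n+1) * Z R n - Aa R (n+1))
      = Complex.abs (Bb R (n+1) * Z R n - Aa R (n+1)) := by ring
    _ ≤ ε * Complex.abs (Bb R n) := hcl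
    _ = Complex.abs (Bb R n) * ε := by ring

lemma EE_ne (hB0 : (0:ℂ) ∉ B) (n : ℕ) : EE R n ≠ 0 := by
  cases n with
  | zero => rw [EE_zero]; exact neg_ne_zero.mpr one_ne_zero
  | succ k => exact (key R hB0 k).2

lemma decay (hε0 : 0 < ε) (hB0 : (0:ℂ) ∉ B) (n : ℕ) :
    Complex.abs (EE R (n+1)) ≤ ε * Complex.abs (EE R n) := by
  have hk := (key R hB0 n).1
  have habs : Complex.abs (Z R (n+1)) * Complex.abs (EE R (n+1)) = Complex.abs (EE R n) := by
    rw [← map_mul, hk, AbsoluteValue.map_neg]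
  have hZ := absZ_ge R hε0 hB0 n
  have h1 : (1/ε) * Complex.abs (EE R (n+1)) ≤ Complex.abs (EE R n) := by
    rw [← habs]
    exact mul_le_mul_of_nonneg_right hZ (Complex.abs.nonneg _)
  calc Complex.abs (EE R (n+1)) = ε * ((1/ε) * Complex.abs (EE R (n+1))) := by
        field_simp
    _ ≤ ε * Complex.abs (EE R n) := mul_le_mul_of_nonneg_left h1 hε0.le

lemma decay_iter (hε0 : 0 < ε) (hB0 : (0:ℂ) ∉ B) (m k : ℕ) :
    Complex.abs (EE R (m+k)) ≤ ε ^ k * Complex.abs (EE R m) := by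
  induction k with
  | zero => simp
  | succ j ih =>
    have h1 : Complex.abs (EE R (m+j+1)) ≤ ε * Complex.abs (EE R (m+j)) := decay R hε0 hB0 _
    have : m + (j+1) = (m + j) + 1 := by omega
    rw [this]
    calc Complex.abs (EE R (m+j+1)) ≤ ε * Complex.abs (EE R (m+j)) := h1
      _ ≤ ε * (ε ^ j * Complex.abs (EE R m)) := mul_le_mul_of_nonneg_left ih hε0.le
      _ = ε ^ (j+1) * Complex.abs (EE R m) := by ring

lemma EE_le_one (hε0 : 0 < ε) (hε1 : ε < 1) (hB0 : (0:ℂ) ∉ B) (n : ℕ) :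
    Complex.abs (EE R n) ≤ 1 := by
  have h := decay_iter R hε0 hB0 0 n
  rw [EE_zero] at h
  simp only [Nat.zero_add, map_neg, map_one] at h
  calc Complex.abs (EE R n) ≤ ε ^ n * 1 := by simpa using h
    _ ≤ 1 := by
        rw [mul_one]
        exact pow_le_one₀ hε0.le hε1.le

def DD (R : Run Δ B ε z ⊤) : ℕ → ℂ := fun n => P R n * Q' R n - P' R n * Q R n

lemma DD_succ (n : ℕ) : DD R (n+1) = P R (n+1) * Q R n - P R n * Q R (n+1) := by
  simp only [DD, P'_succ, Q'_succ]

lemma DD_zero : DD R 0 = 1 := by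
  simp only [DD, P_zero, Q_zero, P'_zero, Q'_zero]; ring

lemma DD_eq (hB0 : (0:ℂ) ∉ B) (n : ℕ) : DD R n = ((-1:ℂ)) ^ n * Bb R n := by
  induction n with
  | zero => rw [DD_zero, Bb_zero]; ring
  | succ k ih =>
    have h : Bb R k * DD R (k+1) = -(Bb R (k+1) * DD R k) := by
      rw [DD_succ]
      simp only [DD]
      linear_combination (Q R k) * recP R hB0 k - (P R k) * recQ R hB0 k
    have h2 : Bb R k * DD R (k+1) = Bb R k * (((-1:ℂ)) ^ (k+1) * Bb R (k+1)) := by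
      rw [h, ih]; ring
    exact mul_left_cancel₀ (Bb_ne R hB0 k) h2

lemma wron (n : ℕ) :
    Q R n * EE R (n+1) - Q R (n+1) * EE R n = -(DD R (n+1)) := by
  rw [DD_succ]
  simp only [EE]
  ring

lemma abs_DD (hB0 : (0:ℂ) ∉ B) (n : ℕ) :
    Complex.abs (DD R n) = Complex.abs (Bb R n) := by
  rw [DD_eq R hB0 n, map_mul]
  simp

lemma qE_le (hε0 : 0 < ε) (hε1 : ε < 1) (hB0 : (0:ℂ) ∉ B) {μ : ℝ}
    (hμ : ∀ n : ℕ, Complex.abs (Bb R (n+1)) ≤ μ) :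
    (∀ n : ℕ, Complex.abs (Q R n * EE R n) ≤ ε * μ / (1 - ε^2)) ∧
    (∀ n : ℕ, Complex.abs (Q R (n+1) * EE R n) ≤ ε * (ε * μ / (1 - ε^2)) + μ) := by
  have hμ0 : 0 ≤ μ := le_trans (Complex.abs.nonneg _) (hμ 0)
  have hden : 0 < 1 - ε^2 := by nlinarith
  set L : ℝ := ε * μ / (1 - ε^2) with hL
  have hL0 : 0 ≤ L := by positivity
  have hLeq : ε * (ε * L + μ) = L := by
    have h : L * (1 - ε^2) = ε * μ := div_mul_cancel₀ _ hden.ne'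
    linear_combination -h
  have main : ∀ n : ℕ, Complex.abs (Q R n * EE R n) ≤ L := by
    intro n
    induction n with
    | zero => rw [Q_zero, zero_mul, map_zero]; exact hL0
    | succ k ih =>
      have hw := wron R k
      have hstep1 : Complex.abs (Q R (k+1) * EE R k) ≤ ε * L + μ := by
        have : Q R (k+1) * EE R k = Q R k * EE R (k+1) + DD R (k+1) := by
          linear_combination -hw
        rw [this]
        calc Complex.abs (Q R k * EE R (k+1) + DD R (k+1))
            ≤ Complex.abs (Q R k * EE R (k+1)) + Complex.abs (DD R (k+1)) :=
              Complex.abs.add_le _ _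
          _ ≤ ε * L + μ := by
              have h1 : Complex.abs (Q R k * EE R (k+1)) ≤ ε * L := by
                rw [map_mul]
                calc Complex.abs (Q R k) * Complex.abs (EE R (k+1))
                    ≤ Complex.abs (Q R k) * (ε * Complex.abs (EE R k)) :=
                      mul_le_mul_of_nonneg_left (decay R hε0 hB0 k) (Complex.abs.nonneg _)
                  _ = ε * Complex.abs (Q R k * EE R k) := by rw [map_mul]; ring
                  _ ≤ ε * L := mul_le_mul_of_nonneg_left ih hε0.le
              have h2 : Complex.abs (DD R (k+1)) ≤ μ := by
                rw [abs_DD R hB0]; exact hμ k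
              linarith
      calc Complex.abs (Q R (k+1) * EE R (k+1))
          = Complex.abs (Q R (k+1)) * Complex.abs (EE R (k+1)) := map_mul _ _ _
        _ ≤ Complex.abs (Q R (k+1)) * (ε * Complex.abs (EE R k)) :=
            mul_le_mul_of_nonneg_left (decay R hε0 hB0 k) (Complex.abs.nonneg _)
        _ = ε * Complex.abs (Q R (k+1) * EE R k) := by rw [map_mul]; ring
        _ ≤ ε * (ε * L + μ) := mul_le_mul_of_nonneg_left hstep1 hε0.le
        _ = L := hLeq
  refine ⟨main, fun n => ?_⟩
  have hw := wron R n
  have : Q R (n+1) * EE R n = Q R n * EE R (n+1) + DD R (n+1) := by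
    linear_combination -hw
  rw [this]
  calc Complex.abs (Q R n * EE R (n+1) + DD R (n+1))
      ≤ Complex.abs (Q R n * EE R (n+1)) + Complex.abs (DD R (n+1)) := Complex.abs.add_le _ _
    _ ≤ ε * L + μ := by
        have h1 : Complex.abs (Q R n * EE R (n+1)) ≤ ε * L := by
          rw [map_mul]
          calc Complex.abs (Q R n) * Complex.abs (EE R (n+1))
              ≤ Complex.abs (Q R n) * (ε * Complex.abs (EE R n)) :=
                mul_le_mul_of_nonneg_left (decay R hε0 hB0 n) (Complex.abs.nonneg _)
            _ = ε * Complex.abs (Q R n * EE R n) := by rw [map_mul]; ring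
            _ ≤ ε * L := mul_le_mul_of_nonneg_left (main n) hε0.le
        have h2 : Complex.abs (DD R (n+1)) ≤ μ := by
          rw [abs_DD R hB0]; exact hμ n
        linarith

lemma prop_of_cross (p q p' q' : ℂ) (hc : q' * p - p' * q = 0) (hnz : ¬(p = 0 ∧ q = 0)) :
    ∃ c : ℂ, p' = c * p ∧ q' = c * q := by
  by_cases hq : q = 0
  · have hp : p ≠ 0 := fun h => hnz ⟨h, hq⟩
    refine ⟨p' / p, by field_simp, ?_⟩
    rw [hq, mul_zero]
    have : q' * p = 0 := by rw [hq] at hc; linear_combination hc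
    rcases mul_eq_zero.mp this with h | h
    · exact h
    · exact absurd h hp
  · refine ⟨q' / q, ?_, by field_simp⟩
    field_simp
    linear_combination -hc

lemma forward_dir (hε0 : 0 < ε) (hε1 : ε < 1)
    (hBne : B.Nonempty) (hBfin : B.Finite) (hB0 : (0:ℂ) ∉ B)
    (hfin : (Set.range fun n : ℕ => R.zs n).Finite) :
    ∃ A₀ B₀ C₀ : ℂ, A₀ ∈ O Δ ∧ B₀ ∈ O Δ ∧ C₀ ∈ O Δ ∧
      ¬(A₀ = 0 ∧ B₀ = 0 ∧ C₀ = 0) ∧ A₀ * z ^ 2 + B₀ * z + C₀ = 0 := by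
  classical
  -- bounds on |b| over B
  have hBfin' : (Complex.abs '' B).Finite := hBfin.image _
  have hFne : hBfin'.toFinset.Nonempty := by
    rw [Set.Finite.toFinset_nonempty]
    exact hBne.image _
  set β : ℝ := hBfin'.toFinset.min' hFne with hβ
  set μ0 : ℝ := hBfin'.toFinset.max' hFne with hμ0
  have hβmem : β ∈ Complex.abs '' B := by
    have := hBfin'.toFinset.min'_mem hFne
    rwa [Set.Finite.mem_toFinset] at this
  have hβpos : 0 < β := by
    obtain ⟨b, hb, hbe⟩ := hβmem
    rw [← hbe]
    have : b ≠ 0 := fun h => hB0 (h ▸ hb)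
    simpa using this
  have hle : ∀ b ∈ B, β ≤ Complex.abs b ∧ Complex.abs b ≤ μ0 := by
    intro b hb
    have hmem : Complex.abs b ∈ hBfin'.toFinset := by
      rw [Set.Finite.mem_toFinset]; exact ⟨b, hb, rfl⟩
    exact ⟨hBfin'.toFinset.min'_le _ hmem, hBfin'.toFinset.le_max' _ hmem⟩
  have hμ0pos : 0 < μ0 := lt_of_lt_of_le hβpos (by
    obtain ⟨b, hb, hbe⟩ := hβmem
    calc β ≤ Complex.abs b := (hle b hb).1
      _ ≤ μ0 := (hle b hb).2)
  -- choose gap g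
  obtain ⟨g, hg⟩ := exists_pow_lt_of_lt_one (x := β / μ0) (y := ε^2)
    (by positivity) (by nlinarith)
  -- pigeonhole
  have : Finite (Set.range fun n : ℕ => R.zs n) := hfin.to_subtype
  obtain ⟨y, hy⟩ := Finite.exists_infinite_fiber (Set.rangeFactorization fun n : ℕ => R.zs n)
  have hS : ((Set.rangeFactorization fun n : ℕ => R.zs n) ⁻¹' {y}).Infinite :=
    Set.infinite_coe_iff.mp hy
  obtain ⟨m, hmS, hm0⟩ := hS.exists_gt 0
  obtain ⟨m', hm'S, hmm'⟩ := hS.exists_gt (m + g)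
  have hzz0 : R.zs (m:ℕ) = R.zs (m':ℕ) := by
    have h1 : Set.rangeFactorization (fun n : ℕ => R.zs n) m = y := hmS
    have h2 : Set.rangeFactorization (fun n : ℕ => R.zs n) m' = y := hm'S
    have := h1.trans h2.symm
    exact congrArg Subtype.val this
  -- normalize indices
  obtain ⟨j, rfl⟩ : ∃ j, m = j + 1 := ⟨m - 1, by omega⟩
  obtain ⟨k, hkm'⟩ : ∃ k, m' = j + k + 1 := ⟨m' - j - 1, by omega⟩
  have hkg : g < k := by omega
  subst hkm'
  have hzz : Z R (j+1) = Z R (j+k+1) := hzz0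
  -- the coefficients
  set pa := P R j with hpa
  set qa := Q R j with hqa
  set pb := P R (j+1) with hpb
  set qb := Q R (j+1) with hqb
  set pc := P R (j+k) with hpc
  set qc := Q R (j+k) with hqc
  set pd := P R (j+k+1) with hpd
  set qd := Q R (j+k+1) with hqd
  refine ⟨qa * qd - qc * qb,
          qc * pb + pc * qb - qa * pd - pa * qd,
          pa * pd - pc * pb, ?_, ?_, ?_, ?_, ?_⟩
  · exact sub_mem (mul_mem (Q_mem R j) (Q_mem R (j+k+1))) (mul_mem (Q_mem R (j+k)) (Q_mem R (j+1)))
  · exact sub_mem (sub_mem (add_mem (mul_mem (Q_mem R (j+k)) (P_mem R trivial (j+1)))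
      (mul_mem (P_mem R trivial (j+k)) (Q_mem R (j+1))))
      (mul_mem (Q_mem R j) (P_mem R trivial (j+k+1))))
      (mul_mem (P_mem R trivial j) (Q_mem R (j+k+1)))
  · exact sub_mem (mul_mem (P_mem R trivial j) (P_mem R trivial (j+k+1)))
      (mul_mem (P_mem R trivial (j+k)) (P_mem R trivial (j+1)))
  · -- nontriviality
    rintro ⟨hA, hB', hC⟩
    have hDb : DD R (j+1) ≠ 0 := by
      rw [DD_eq R hB0]
      exact mul_ne_zero (pow_ne_zero _ (neg_ne_zero.mpr one_ne_zero)) (Bb_ne R hB0 _)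
    have hDDb : DD R (j+1) = pb * qa - pa * qb := DD_succ R j
    have hα : DD R (j+1) * (qd * pb - pd * qb) = 0 := by
      rw [hDDb]
      linear_combination pb^2 * hA + pb * qb * hB' + qb^2 * hC
    have hβ2 : DD R (j+1) * (qc * pa - pc * qa) = 0 := by
      rw [hDDb]
      linear_combination pa^2 * hA + pa * qa * hB' + qa^2 * hC
    have hcross1 : qd * pb - pd * qb = 0 := by
      rcases mul_eq_zero.mp hα with h | h
      · exact absurd h hDb
      · exact h
    have hcross2 : qc * pa - pc * qa = 0 := by
      rcases mul_eq_zero.mp hβ2 with h | h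
      · exact absurd h hDb
      · exact h
    have hnzb : ¬(pb = 0 ∧ qb = 0) := by
      rintro ⟨h1, h2⟩
      apply hDb
      rw [hDDb, h1, h2]; ring
    have hnza : ¬(pa = 0 ∧ qa = 0) := by
      rintro ⟨h1, h2⟩
      apply hDb
      rw [hDDb, h1, h2]; ring
    obtain ⟨c, hcp, hcq⟩ := prop_of_cross pb qb pd qd hcross1 hnzb
    obtain ⟨d, hdp, hdq⟩ := prop_of_cross pa qa pc qc hcross2 hnza
    -- determinant relation
    have hDd : DD R (j+k+1) = c * d * DD R (j+1) := by
      rw [DD_succ R (j+k), DD_succ R j]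
      show pd * qc - pc * qd = c * d * (pb * qa - pa * qb)
      rw [hcp, hcq, hdp, hdq]; ring
    -- e-form relations
    have hEc : EE R (j+k+1) = c * EE R (j+1) := by
      simp only [EE]
      show qd * z - pd = c * (qb * z - pb)
      rw [hcp, hcq]; ring
    have hEd : EE R (j+k) = d * EE R (j) := by
      simp only [EE]
      show qc * z - pc = d * (qa * z - pa)
      rw [hdp, hdq]; ring
    -- bounds on |c|,|d|
    have hEb_pos : 0 < Complex.abs (EE R (j+1)) := by
      simpa [Complex.abs.pos_iff] using (EE_ne R hB0 (j+1))
    have hEa_pos : 0 < Complex.abs (EE R j) := by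
      simpa [Complex.abs.pos_iff] using (EE_ne R hB0 j)
    have hc_le : Complex.abs c ≤ ε ^ k := by
      have h1 : Complex.abs (EE R ((j+1)+k)) ≤ ε ^ k * Complex.abs (EE R (j+1)) :=
        decay_iter R hε0 hB0 (j+1) k
      have h2 : (j+1)+k = j+k+1 := by omega
      rw [h2, hEc, map_mul] at h1
      exact le_of_mul_le_mul_right (by linarith [h1]) hEb_pos
    have hd_le : Complex.abs d ≤ ε ^ k := by
      have h1 : Complex.abs (EE R (j+k)) ≤ ε ^ k * Complex.abs (EE R j) :=
        decay_iter R hε0 hB0 j k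
      rw [hEd, map_mul] at h1
      exact le_of_mul_le_mul_right (by linarith [h1]) hEa_pos
    -- magnitudes of determinants
    have hDd1 : Complex.abs (DD R (j+k+1)) = Complex.abs (Bb R (j+k+1)) := abs_DD R hB0 _
    have hDd2 : Complex.abs (DD R (j+1)) = Complex.abs (Bb R (j+1)) := abs_DD R hB0 _
    have hβle : β ≤ Complex.abs (Bb R (j+k+1)) := (hle _ (Bb_mem R (j+k))).1
    have hμle : Complex.abs (Bb R (j+1)) ≤ μ0 := (hle _ (Bb_mem R j)).2
    have habs : Complex.abs (DD R (j+k+1)) =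
        Complex.abs c * Complex.abs d * Complex.abs (DD R (j+1)) := by
      rw [hDd, map_mul, map_mul]
    have hchain : β ≤ ε ^ k * ε ^ k * μ0 := by
      calc β ≤ Complex.abs (Bb R (j+k+1)) := hβle
        _ = Complex.abs c * Complex.abs d * Complex.abs (DD R (j+1)) := by rw [← hDd1, habs]
        _ ≤ ε ^ k * ε ^ k * μ0 := by
            have h1 := Complex.abs.nonneg c
            have h2 := Complex.abs.nonneg d
            have h3 := Complex.abs.nonneg (DD R (j+1))
            have h4 : Complex.abs (DD R (j+1)) ≤ μ0 := by rw [hDd2]; exact hμle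
            have hεk : (0:ℝ) ≤ ε ^ k := by positivity
            have hcd : Complex.abs c * Complex.abs d ≤ ε ^ k * ε ^ k :=
              mul_le_mul hc_le hd_le h2 hεk
            exact mul_le_mul hcd h4 h3 (by positivity)
    have hpow : ε ^ k * ε ^ k ≤ (ε^2) ^ g := by
      have h1 : ε ^ k * ε ^ k = (ε^2) ^ k := by ring
      rw [h1]
      exact pow_le_pow_of_le_one (by positivity) (by nlinarith) (by omega)
    have hfinal : β < β := by
      calc β ≤ ε ^ k * ε ^ k * μ0 := hchain
        _ ≤ (ε^2)^g * μ0 := mul_le_mul_of_nonneg_right hpow hμ0pos.le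
        _ < (β / μ0) * μ0 := mul_lt_mul_of_pos_right hg hμ0pos
        _ = β := by field_simp
    exact lt_irrefl _ hfinal
  · -- the quadratic relation
    have h1 := (key R hB0 j).1
    have h2 := (key R hB0 (j+k)).1
    simp only [EE] at h1 h2
    show (qa * qd - qc * qb) * z^2 + (qc * pb + pc * qb - qa * pd - pa * qd) * z
        + (pa * pd - pc * pb) = 0
    have hza : Z R (j+1) * (qb * z - pb) = -(qa * z - pa) := h1
    have hzc : Z R (j+k+1) * (qd * z - pd) = -(qc * z - pc) := h2
    linear_combination (qd * z - pd) * hza - (qb * z - pb) * hzc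
      - ((qb * z - pb) * (qd * z - pd)) * hzz

lemma quad_root_finite (a b c : ℂ) (h : ¬(a = 0 ∧ b = 0 ∧ c = 0)) :
    {x : ℂ | a * x^2 + b * x + c = 0}.Finite := by
  set p : Polynomial ℂ :=
    Polynomial.C a * Polynomial.X^2 + Polynomial.C b * Polynomial.X + Polynomial.C c with hp
  have hca : p.coeff 2 = a := by
    simp [hp, Polynomial.coeff_add, Polynomial.coeff_C_mul, Polynomial.coeff_X_pow,
      Polynomial.coeff_X, Polynomial.coeff_C]
  have hcb : p.coeff 1 = b := by
    simp [hp, Polynomial.coeff_add, Polynomial.coeff_C_mul, Polynomial.coeff_X_pow,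
      Polynomial.coeff_X, Polynomial.coeff_C]
  have hcc : p.coeff 0 = c := by
    simp [hp, Polynomial.coeff_add, Polynomial.coeff_C_mul, Polynomial.coeff_X_pow,
      Polynomial.coeff_X, Polynomial.coeff_C]
  have hpne : p ≠ 0 := by
    intro h0
    exact h ⟨by rw [← hca, h0]; simp, by rw [← hcb, h0]; simp, by rw [← hcc, h0]; simp⟩
  have hsub : {x : ℂ | a * x^2 + b * x + c = 0} ⊆ {x | p.IsRoot x} := by
    intro x hx
    simp only [Set.mem_setOf_eq] at hx ⊢
    simp [Polynomial.IsRoot, hp, Polynomial.eval_add, Polynomial.eval_mul]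
    linear_combination hx
  exact (Polynomial.finite_setOf_isRoot hpne).subset hsub

set_option maxHeartbeats 2000000 in
lemma backward_dir (hΔneg : Δ < 0) (hΔmod : Δ % 4 = 0 ∨ Δ % 4 = 1)
    (hε0 : 0 < ε) (hε1 : ε < 1)
    (hBne : B.Nonempty) (hBfin : B.Finite) (hB0 : (0:ℂ) ∉ B)
    (hquad : ∃ A₀ B₀ C₀ : ℂ, A₀ ∈ O Δ ∧ B₀ ∈ O Δ ∧ C₀ ∈ O Δ ∧
      ¬(A₀ = 0 ∧ B₀ = 0 ∧ C₀ = 0) ∧ A₀ * z ^ 2 + B₀ * z + C₀ = 0) :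
    (Set.range fun n : ℕ => R.zs n).Finite := by
  classical
  obtain ⟨A₀, B₀, C₀, hA₀O, hB₀O, hC₀O, hnz, heq⟩ := hquad
  -- upper bound μ0 on |b|
  have hBfin' : (Complex.abs '' B).Finite := hBfin.image _
  have hFne : hBfin'.toFinset.Nonempty := by
    rw [Set.Finite.toFinset_nonempty]; exact hBne.image _
  set μ0 : ℝ := hBfin'.toFinset.max' hFne with hμ0def
  have hμle : ∀ n : ℕ, Complex.abs (Bb R (n+1)) ≤ μ0 := by
    intro n
    apply hBfin'.toFinset.le_max'
    rw [Set.Finite.mem_toFinset]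
    exact ⟨_, Bb_mem R n, rfl⟩
  have hμ0nn : 0 ≤ μ0 := le_trans (Complex.abs.nonneg _) (hμle 0)
  obtain ⟨hq1, hq2⟩ := qE_le R hε0 hε1 hB0 hμle
  set L : ℝ := ε * μ0 / (1 - ε^2) with hLdef
  have hden : 0 < 1 - ε^2 := by nlinarith
  have hL0 : 0 ≤ L := by positivity
  -- the uniform bound M
  set M1 : ℝ := Complex.abs A₀ + (2 * Complex.abs A₀ * Complex.abs z + Complex.abs B₀) * L
    with hM1def
  set M2 : ℝ := 2 * Complex.abs A₀ +
    (2 * Complex.abs A₀ * Complex.abs z + Complex.abs B₀) * ((ε * L + μ0) + L) with hM2def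
  have hM1nn : 0 ≤ M1 := by positivity
  have hM2nn : 0 ≤ M2 := by
    have : (0:ℝ) ≤ ε * L + μ0 := by positivity
    positivity
  set M : ℝ := M1 + M2 with hMdef
  -- finite target set
  have hT : {w : ℂ | w ∈ O Δ ∧ Complex.abs w ≤ M}.Finite := O_discrete hΔneg hΔmod M
  set T := {w : ℂ | w ∈ O Δ ∧ Complex.abs w ≤ M} with hTdef
  set U := {x : ℂ | ∃ a ∈ T, ∃ b ∈ T, ∃ c ∈ T,
    ¬(a = 0 ∧ b = 0 ∧ c = 0) ∧ a * x^2 + b * x + c = 0} with hUdef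
  have hU : U.Finite := by
    have hsub : U ⊆ ⋃ a ∈ T, ⋃ b ∈ T, ⋃ c ∈ T,
        {x : ℂ | a * x^2 + b * x + c = 0} ∩ {x | ¬(a = 0 ∧ b = 0 ∧ c = 0)} := by
      rintro x ⟨a, ha, b, hb, c, hc, hntr, hroot⟩
      simp only [Set.mem_iUnion]
      exact ⟨a, ha, b, hb, c, hc, hroot, hntr⟩
    refine Set.Finite.subset ?_ hsub
    refine hT.biUnion fun a _ => hT.biUnion fun b _ => hT.biUnion fun c _ => ?_
    by_cases h : a = 0 ∧ b = 0 ∧ c = 0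
    · refine Set.Finite.subset (Set.finite_empty) ?_
      rintro x ⟨-, hx⟩
      exact absurd h hx
    · exact ((quad_root_finite a b c h).inter_of_left _)
  -- range ⊆ insert z U
  have hmain : (Set.range fun n : ℕ => R.zs n) ⊆ insert z U := by
    rintro x ⟨n, rfl⟩
    cases n with
    | zero =>
      left
      exact Z_zero R
    | succ n =>
      right
      show Z R (n+1) ∈ U
      obtain ⟨p, hp⟩ : ∃ p, P R (n+1) = p := ⟨_, rfl⟩
      obtain ⟨q, hq⟩ : ∃ q, Q R (n+1) = q := ⟨_, rfl⟩
      obtain ⟨p', hp'⟩ : ∃ p', P R n = p' := ⟨_, rfl⟩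
      obtain ⟨q', hq'⟩ : ∃ q', Q R n = q' := ⟨_, rfl⟩
      obtain ⟨w, hw⟩ : ∃ w, Z R (n+1) = w := ⟨_, rfl⟩
      rw [hw]
      have hE1d : EE R (n+1) = q * z - p := by
        simp only [EE]; rw [hp, hq]
      have hE0d : EE R n = q' * z - p' := by
        simp only [EE]; rw [hp', hq']
      have hkey := (key R hB0 n).1
      rw [hw, hE1d, hE0d] at hkey
      have hrel : z * (q * w + q') = p * w + p' := by linear_combination hkey
      set An := A₀ * p^2 + B₀ * p * q + C₀ * q^2 with hAn
      set Cn := A₀ * p'^2 + B₀ * p' * q' + C₀ * q'^2 with hCn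
      set Bn := 2 * A₀ * p * p' + B₀ * (p * q' + p' * q) + 2 * C₀ * q * q' with hBn
      have hroot : An * w^2 + Bn * w + Cn = 0 := by
        rw [hAn, hBn, hCn]
        linear_combination (q * w + q')^2 * heq -
          (A₀ * ((p * w + p') + z * (q * w + q')) + B₀ * (q * w + q')) * hrel
      -- memberships in O
      have h2O : (2:ℂ) ∈ O Δ := by
        rw [show (2:ℂ) = 1 + 1 by norm_num]
        exact add_mem (one_mem _) (one_mem _)
      have hpO : p ∈ O Δ := hp ▸ P_mem R trivial (n+1)
      have hqO : q ∈ O Δ := hq ▸ Q_mem R (n+1)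
      have hp'O : p' ∈ O Δ := hp' ▸ P_mem R trivial n
      have hq'O : q' ∈ O Δ := hq' ▸ Q_mem R n
      have hAnO : An ∈ O Δ := by
        refine add_mem (add_mem (mul_mem hA₀O (pow_mem hpO 2)) ?_) (mul_mem hC₀O (pow_mem hqO 2))
        exact mul_mem (mul_mem hB₀O hpO) hqO
      have hCnO : Cn ∈ O Δ := by
        refine add_mem (add_mem (mul_mem hA₀O (pow_mem hp'O 2)) ?_)
          (mul_mem hC₀O (pow_mem hq'O 2))
        exact mul_mem (mul_mem hB₀O hp'O) hq'O
      have hBnO : Bn ∈ O Δ := by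
        refine add_mem (add_mem ?_ ?_) ?_
        · exact mul_mem (mul_mem (mul_mem h2O hA₀O) hpO) hp'O
        · exact mul_mem hB₀O (add_mem (mul_mem hpO hq'O) (mul_mem hp'O hqO))
        · exact mul_mem (mul_mem (mul_mem h2O hC₀O) hqO) hq'O
      -- bounds
      have hE1 : Complex.abs (EE R (n+1)) ≤ 1 := EE_le_one R hε0 hε1 hB0 (n+1)
      have hE0 : Complex.abs (EE R n) ≤ 1 := EE_le_one R hε0 hε1 hB0 n
      have hqe1 : Complex.abs (q * EE R (n+1)) ≤ L := by
        have := hq1 (n+1); rwa [hq] at this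
      have hqe0 : Complex.abs (q' * EE R n) ≤ L := by
        have := hq1 n; rwa [hq'] at this
      have hqe2 : Complex.abs (q * EE R n) ≤ ε * L + μ0 := by
        have := hq2 n; rwa [hq] at this
      have hqe3 : Complex.abs (q' * EE R (n+1)) ≤ L := by
        calc Complex.abs (q' * EE R (n+1)) = Complex.abs q' * Complex.abs (EE R (n+1)) :=
              map_mul _ _ _
          _ ≤ Complex.abs q' * (ε * Complex.abs (EE R n)) :=
              mul_le_mul_of_nonneg_left (decay R hε0 hB0 n) (Complex.abs.nonneg _)
          _ = ε * Complex.abs (q' * EE R n) := by rw [map_mul]; ring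
          _ ≤ ε * L := mul_le_mul_of_nonneg_left hqe0 hε0.le
          _ ≤ 1 * L := mul_le_mul_of_nonneg_right hε1.le hL0
          _ = L := one_mul L
      -- e-substituted forms
      have hAneq : An = A₀ * (EE R (n+1))^2 - 2 * A₀ * z * (q * EE R (n+1))
          - B₀ * (q * EE R (n+1)) := by
        rw [hAn, hE1d]
        linear_combination q^2 * heq
      have hCneq : Cn = A₀ * (EE R n)^2 - 2 * A₀ * z * (q' * EE R n)
          - B₀ * (q' * EE R n) := by
        rw [hCn, hE0d]
        linear_combination q'^2 * heq
      have hBneq : Bn = 2 * A₀ * (EE R (n+1)) * (EE R n)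
          - 2 * A₀ * z * (q * EE R n + q' * EE R (n+1))
          - B₀ * (q * EE R n + q' * EE R (n+1)) := by
        rw [hBn, hE1d, hE0d]
        linear_combination (2 * q * q') * heq
      have habsA : Complex.abs An ≤ M1 := by
        rw [hAneq, hM1def]
        have e1 : Complex.abs (A₀ * (EE R (n+1))^2) ≤ Complex.abs A₀ := by
          rw [map_mul, map_pow]
          have h2 : Complex.abs (EE R (n+1)) ^ 2 ≤ 1 :=
            pow_le_one₀ (Complex.abs.nonneg _) hE1
          nlinarith [Complex.abs.nonneg A₀]
        have e2 : Complex.abs (2 * A₀ * z * (q * EE R (n+1)))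
            ≤ 2 * Complex.abs A₀ * Complex.abs z * L := by
          rw [map_mul, map_mul, map_mul]
          simp only [Complex.abs_two]
          refine mul_le_mul_of_nonneg_left hqe1 ?_
          positivity
        have e3 : Complex.abs (B₀ * (q * EE R (n+1))) ≤ Complex.abs B₀ * L := by
          rw [map_mul]
          exact mul_le_mul_of_nonneg_left hqe1 (Complex.abs.nonneg _)
        calc Complex.abs (A₀ * (EE R (n+1))^2 - 2 * A₀ * z * (q * EE R (n+1))
              - B₀ * (q * EE R (n+1)))
            ≤ Complex.abs (A₀ * (EE R (n+1))^2 - 2 * A₀ * z * (q * EE R (n+1)))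
              + Complex.abs (B₀ * (q * EE R (n+1))) := Complex.abs.sub_le_add _ _
          _ ≤ (Complex.abs (A₀ * (EE R (n+1))^2)
              + Complex.abs (2 * A₀ * z * (q * EE R (n+1))))
              + Complex.abs (B₀ * (q * EE R (n+1))) :=
                add_le_add_left (Complex.abs.sub_le_add _ _) _
          _ ≤ Complex.abs A₀ + (2 * Complex.abs A₀ * Complex.abs z + Complex.abs B₀) * L := by
              nlinarith [e1, e2, e3]
      have habsC : Complex.abs Cn ≤ M1 := by
        rw [hCneq, hM1def]
        have e1 : Complex.abs (A₀ * (EE R n)^2) ≤ Complex.abs A₀ := by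
          rw [map_mul, map_pow]
          have h2 : Complex.abs (EE R n) ^ 2 ≤ 1 :=
            pow_le_one₀ (Complex.abs.nonneg _) hE0
          nlinarith [Complex.abs.nonneg A₀]
        have e2 : Complex.abs (2 * A₀ * z * (q' * EE R n))
            ≤ 2 * Complex.abs A₀ * Complex.abs z * L := by
          rw [map_mul, map_mul, map_mul]
          simp only [Complex.abs_two]
          refine mul_le_mul_of_nonneg_left hqe0 ?_
          positivity
        have e3 : Complex.abs (B₀ * (q' * EE R n)) ≤ Complex.abs B₀ * L := by
          rw [map_mul]
          exact mul_le_mul_of_nonneg_left hqe0 (Complex.abs.nonneg _)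
        calc Complex.abs (A₀ * (EE R n)^2 - 2 * A₀ * z * (q' * EE R n) - B₀ * (q' * EE R n))
            ≤ Complex.abs (A₀ * (EE R n)^2 - 2 * A₀ * z * (q' * EE R n))
              + Complex.abs (B₀ * (q' * EE R n)) := Complex.abs.sub_le_add _ _
          _ ≤ (Complex.abs (A₀ * (EE R n)^2) + Complex.abs (2 * A₀ * z * (q' * EE R n)))
              + Complex.abs (B₀ * (q' * EE R n)) :=
                add_le_add_left (Complex.abs.sub_le_add _ _) _
          _ ≤ Complex.abs A₀ + (2 * Complex.abs A₀ * Complex.abs z + Complex.abs B₀) * L := by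
              nlinarith [e1, e2, e3]
      have habsB : Complex.abs Bn ≤ M2 := by
        rw [hBneq, hM2def]
        have hsum : Complex.abs (q * EE R n + q' * EE R (n+1)) ≤ (ε * L + μ0) + L := by
          calc Complex.abs (q * EE R n + q' * EE R (n+1))
              ≤ Complex.abs (q * EE R n) + Complex.abs (q' * EE R (n+1)) :=
                Complex.abs.add_le _ _
            _ ≤ (ε * L + μ0) + L := add_le_add hqe2 hqe3
        have e1 : Complex.abs (2 * A₀ * (EE R (n+1)) * (EE R n)) ≤ 2 * Complex.abs A₀ := by
          rw [map_mul, map_mul, map_mul]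
          simp only [Complex.abs_two]
          have hE10 : Complex.abs (EE R (n+1)) * Complex.abs (EE R n) ≤ 1 :=
            mul_le_one₀ hE1 (Complex.abs.nonneg _) hE0
          nlinarith [hE10, Complex.abs.nonneg A₀]
        have e2 : Complex.abs (2 * A₀ * z * (q * EE R n + q' * EE R (n+1)))
            ≤ 2 * Complex.abs A₀ * Complex.abs z * ((ε * L + μ0) + L) := by
          rw [map_mul, map_mul, map_mul]
          simp only [Complex.abs_two]
          refine mul_le_mul_of_nonneg_left hsum ?_
          positivity
        have e3 : Complex.abs (B₀ * (q * EE R n + q' * EE R (n+1)))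
            ≤ Complex.abs B₀ * ((ε * L + μ0) + L) := by
          rw [map_mul]
          exact mul_le_mul_of_nonneg_left hsum (Complex.abs.nonneg _)
        calc Complex.abs (2 * A₀ * (EE R (n+1)) * (EE R n)
              - 2 * A₀ * z * (q * EE R n + q' * EE R (n+1))
              - B₀ * (q * EE R n + q' * EE R (n+1)))
            ≤ Complex.abs (2 * A₀ * (EE R (n+1)) * (EE R n)
              - 2 * A₀ * z * (q * EE R n + q' * EE R (n+1)))
              + Complex.abs (B₀ * (q * EE R n + q' * EE R (n+1))) := Complex.abs.sub_le_add _ _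
          _ ≤ (Complex.abs (2 * A₀ * (EE R (n+1)) * (EE R n))
              + Complex.abs (2 * A₀ * z * (q * EE R n + q' * EE R (n+1))))
              + Complex.abs (B₀ * (q * EE R n + q' * EE R (n+1))) :=
                add_le_add_left (Complex.abs.sub_le_add _ _) _
          _ ≤ 2 * Complex.abs A₀
              + (2 * Complex.abs A₀ * Complex.abs z + Complex.abs B₀) * ((ε * L + μ0) + L) := by
              nlinarith [e1, e2, e3]
      -- nontriviality
      have hDne : DD R (n+1) ≠ 0 := by
        rw [DD_eq R hB0]
        exact mul_ne_zero (pow_ne_zero _ (neg_ne_zero.mpr one_ne_zero)) (Bb_ne R hB0 _)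
      obtain ⟨D, hD⟩ : ∃ D, DD R (n+1) = D := ⟨_, rfl⟩
      have hDform : D = p * q' - p' * q := by
        rw [← hD, DD_succ R n, hp, hq, hp', hq']
      have hDne' : D ≠ 0 := hD ▸ hDne
      have hntr : ¬(An = 0 ∧ Bn = 0 ∧ Cn = 0) := by
        rintro ⟨hA0, hB0', hC0⟩
        have hD2 : D ^ 2 ≠ 0 := pow_ne_zero _ hDne'
        have kA : A₀ * D ^ 2 = An * q'^2 - Bn * (q' * q) + Cn * q^2 := by
          rw [hDform, hAn, hBn, hCn]; ring
        have kC : C₀ * D ^ 2 = An * p'^2 - Bn * (p' * p) + Cn * p^2 := by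
          rw [hDform, hAn, hBn, hCn]; ring
        have kB : B₀ * D ^ 2 = -2 * An * p' * q' + Bn * (p * q' + p' * q)
            - 2 * Cn * p * q := by
          rw [hDform, hAn, hBn, hCn]; ring
        rw [hA0, hB0', hC0] at kA kB kC
        have kA0 : A₀ * D ^ 2 = 0 := by simpa using kA
        have kB0 : B₀ * D ^ 2 = 0 := by simpa using kB
        have kC0 : C₀ * D ^ 2 = 0 := by simpa using kC
        apply hnz
        refine ⟨?_, ?_, ?_⟩
        · rcases mul_eq_zero.mp kA0 with h | h
          · exact h
          · exact absurd h hD2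
        · rcases mul_eq_zero.mp kB0 with h | h
          · exact h
          · exact absurd h hD2
        · rcases mul_eq_zero.mp kC0 with h | h
          · exact h
          · exact absurd h hD2
      exact ⟨An, ⟨hAnO, by rw [hMdef]; linarith⟩, Bn, ⟨hBnO, by rw [hMdef]; linarith⟩,
        Cn, ⟨hCnO, by rw [hMdef]; linarith⟩, hntr, hroot⟩
  exact (hU.insert z).subset hmain

end RunLemmas

theorem stmt13 (Δ : ℤ) (hΔneg : Δ < 0) (hΔmod : Δ % 4 = 0 ∨ Δ % 4 = 1)
    (B : Set ℂ) (ε : ℝ) (hε0 : 0 < ε) (hε1 : ε < 1) (hadm : Admissible Δ B ε)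
    (z : ℂ) (R : Run Δ B ε z ⊤) :
    (Set.range fun n : ℕ => R.zs n).Finite ↔
      ∃ A₀ B₀ C₀ : ℂ, A₀ ∈ O Δ ∧ B₀ ∈ O Δ ∧ C₀ ∈ O Δ ∧
        ¬(A₀ = 0 ∧ B₀ = 0 ∧ C₀ = 0) ∧ A₀ * z ^ 2 + B₀ * z + C₀ = 0 := by
  obtain ⟨hBne, hBfin, hBsub, hB0, hcov⟩ := hadm
  constructor
  · intro hfin
    exact forward_dir R hε0 hε1 hBne hBfin hB0 hfin
  · intro hq
    exact backward_dir R hΔneg hΔmod hε0 hε1 hBne hBfin hB0 hq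


end CFNE
end
end
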